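/- arXiv:1406.3219 — 5 statements merged into one kernel-verified Lean document; each statement's English description precedes it below -/
import Mathlib

section
/- Let ℰ be a locally cartesian closed category with a terminal object (hence cartesian closed), and let p : A₁ → A₀ and q : B₁ → B₀ be morphisms of ℰ. Let G = [A₀, B₀] ×_{[A₁, B₀]} [A₁, B₁] be the pullback of the maps [p, B₀] : [A₀, B₀] → [A₁, B₀] and [A₁, q] : [A₁, B₁] → [A₁, B₀], and define e₁ : G × A₁ → B₁ and e₀ : G × A₀ → B₀ as the evaluations composed with the respective pullback projections. Then e₀ ∘ (G × p) = q ∘ e₁, and (G, e₀, e₁) is universal: for every object X and maps f₁ : X × A₁ → B₁, f₀ : X × A₀ → B₀ with f₀ ∘ (X × p) = q ∘ f₁, there is a unique map f : X → G such that f₁ = e₁ ∘ (f × A₁) and f₀ = e₀ ∘ (f × A₀). -/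
/-!
Maps `W ⊗ A ⟶ B` correspond to maps `W ⟶ [A, B]`, naturally in `W`, and under this
correspondence precomposition with `W ◁ p` becomes postcomposition with `[p, B₀]`, and
postcomposition with `q` becomes postcomposition with `[A₁, q]`. So commutative squares from
`W ◁ p` to `q` are exactly cones over the cospan defining `G`, and the universal property of
`(G, e₀, e₁)` is that of the pullback.
-/

open CategoryTheory Category Limits Opposite MonoidalCategory

universe v u

noncomputable section

namespace NatModel

variable {C : Type u} [SmallCategory C]

attribute [local instance] BraidedCategory.ofCartesianMonoidalCategory

theorem pullback.existsUnique_lift {E : Type*} [Category E] {X Y Z W : E} (f : X ⟶ Z)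
    (g : Y ⟶ Z) [HasPullback f g] (a : W ⟶ X) (b : W ⟶ Y) (w : a ≫ f = b ≫ g) :
    ∃! h : W ⟶ pullback f g, h ≫ pullback.fst f g = a ∧ h ≫ pullback.snd f g = b :=
  ⟨pullback.lift a b w, ⟨pullback.lift_fst a b w, pullback.lift_snd a b w⟩,
    fun _ ⟨ha, hb⟩ =>
      pullback.hom_ext (by rw [ha, pullback.lift_fst]) (by rw [hb, pullback.lift_snd])⟩

section UncurryRight

variable {E : Type*} [Category E] [CartesianMonoidalCategory E] [MonoidalClosed E]

/-- Mathlib's `uncurry` produces maps `A ⊗ W ⟶ B`; the braiding moves the exponent to the right. -/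
def uncurryRight {W A B : E} : (W ⟶ (ihom A).obj B) ≃ (W ⊗ A ⟶ B) where
  toFun g := (β_ W A).hom ≫ MonoidalClosed.uncurry g
  invFun f := MonoidalClosed.curry ((β_ W A).inv ≫ f)
  left_inv g := by simp
  right_inv f := by simp

theorem braiding_hom_comp_whiskerLeft_comp_ev {W A B : E} (g : W ⟶ (ihom A).obj B) :
    (β_ W A).hom ≫ (A ◁ g) ≫ (ihom.ev A).app B = uncurryRight g :=
  rfl

theorem whiskerRight_comp_uncurryRight {W X A B : E} (h : W ⟶ X) (g : X ⟶ (ihom A).obj B) :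
    h ▷ A ≫ uncurryRight g = uncurryRight (h ≫ g) := by
  simp only [uncurryRight, Equiv.coe_fn_mk, MonoidalClosed.uncurry_natural_left,
    BraidedCategory.braiding_naturality_left_assoc]

theorem whiskerLeft_comp_uncurryRight {W A₀ A₁ B : E} (p : A₁ ⟶ A₀)
    (g : W ⟶ (ihom A₀).obj B) :
    W ◁ p ≫ uncurryRight g = uncurryRight (g ≫ (MonoidalClosed.pre p).app B) := by
  simp only [uncurryRight, Equiv.coe_fn_mk, MonoidalClosed.uncurry_pre_app,
    BraidedCategory.braiding_naturality_right_assoc]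

theorem uncurryRight_comp {W A B B' : E} (g : W ⟶ (ihom A).obj B) (q : B ⟶ B') :
    uncurryRight g ≫ q = uncurryRight (g ≫ (ihom A).map q) := by
  simp only [uncurryRight, Equiv.coe_fn_mk, MonoidalClosed.uncurry_natural_right, assoc]

end UncurryRight

theorem generic_filler_object_general {E : Type u} [Category.{v} E] [HasFiniteLimits E]
    [CartesianMonoidalCategory E] [MonoidalClosed E]
    {A₀ A₁ B₀ B₁ : E} (p : A₁ ⟶ A₀) (q : B₁ ⟶ B₀) :
    let G := pullback ((MonoidalClosed.pre p).app B₀) ((ihom A₁).map q)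
    let e₁ : G ⊗ A₁ ⟶ B₁ :=
      (@BraidedCategory.braiding E _ _ BraidedCategory.ofCartesianMonoidalCategory G A₁).hom ≫ (A₁ ◁ pullback.snd ((MonoidalClosed.pre p).app B₀) ((ihom A₁).map q)) ≫
        (ihom.ev A₁).app B₁
    let e₀ : G ⊗ A₀ ⟶ B₀ :=
      (@BraidedCategory.braiding E _ _ BraidedCategory.ofCartesianMonoidalCategory G A₀).hom ≫ (A₀ ◁ pullback.fst ((MonoidalClosed.pre p).app B₀) ((ihom A₁).map q)) ≫
        (ihom.ev A₀).app B₀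
    (G ◁ p) ≫ e₀ = e₁ ≫ q ∧
    ∀ (W : E) (f₁ : W ⊗ A₁ ⟶ B₁) (f₀ : W ⊗ A₀ ⟶ B₀), (W ◁ p) ≫ f₀ = f₁ ≫ q →
      ∃! h : W ⟶ G, f₁ = (h ▷ A₁) ≫ e₁ ∧ f₀ = (h ▷ A₀) ≫ e₀ := by
  intro G e₁ e₀
  simp only [e₀, e₁, braiding_hom_comp_whiskerLeft_comp_ev, whiskerLeft_comp_uncurryRight,
    uncurryRight_comp, whiskerRight_comp_uncurryRight]
  refine ⟨congrArg uncurryRight pullback.condition, fun W f₁ f₀ hf => ?_⟩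
  obtain ⟨c₁, rfl⟩ := uncurryRight.surjective f₁
  obtain ⟨c₀, rfl⟩ := uncurryRight.surjective f₀
  rw [whiskerLeft_comp_uncurryRight, uncurryRight_comp, uncurryRight.apply_eq_iff_eq] at hf
  simp only [uncurryRight.apply_eq_iff_eq, eq_comm (a := c₁), eq_comm (a := c₀), and_comm]
  exact pullback.existsUnique_lift _ _ c₀ c₁ hf

/-- In a locally cartesian closed category with a terminal object (hence
cartesian closed), for `p : A₁ ⟶ A₀` and `q : B₁ ⟶ B₀`, the object
`G = [A₀, B₀] ×_{[A₁, B₀]} [A₁, B₁]` together with the evaluations `e₁ : G × A₁ ⟶ B₁` and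
`e₀ : G × A₀ ⟶ B₀` satisfies `e₀ ∘ (G × p) = q ∘ e₁` and is the universal commutative square
from `- × p` to `q`. -/
theorem generic_filler_object {E : Type u} [Category.{v} E] [HasFiniteLimits E]
    [CartesianMonoidalCategory E] [MonoidalClosed E]
    (lcc : ∀ Z : E, @MonoidalClosed (Over Z) _
      (CartesianMonoidalCategory.ofHasFiniteProducts (C := Over Z)).toMonoidalCategory)
    {A₀ A₁ B₀ B₁ : E} (p : A₁ ⟶ A₀) (q : B₁ ⟶ B₀) :
    let G := pullback ((MonoidalClosed.pre p).app B₀) ((ihom A₁).map q)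
    let e₁ : G ⊗ A₁ ⟶ B₁ :=
      (@BraidedCategory.braiding E _ _ BraidedCategory.ofCartesianMonoidalCategory G A₁).hom ≫ (A₁ ◁ pullback.snd ((MonoidalClosed.pre p).app B₀) ((ihom A₁).map q)) ≫
        (ihom.ev A₁).app B₁
    let e₀ : G ⊗ A₀ ⟶ B₀ :=
      (@BraidedCategory.braiding E _ _ BraidedCategory.ofCartesianMonoidalCategory G A₀).hom ≫ (A₀ ◁ pullback.fst ((MonoidalClosed.pre p).app B₀) ((ihom A₁).map q)) ≫
        (ihom.ev A₀).app B₀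
    (G ◁ p) ≫ e₀ = e₁ ≫ q ∧
    ∀ (W : E) (f₁ : W ⊗ A₁ ⟶ B₁) (f₀ : W ⊗ A₀ ⟶ B₀), (W ◁ p) ≫ f₀ = f₁ ≫ q →
      ∃! h : W ⟶ G, f₁ = (h ▷ A₁) ≫ e₁ ∧ f₀ = (h ▷ A₀) ≫ e₀ :=
  generic_filler_object_general p q

end NatModel

end
end

section
/- Let p : Ũ ⟶ U be a representable natural transformation of presheaves on a small category ℂ, and let P_p be its polynomial endofunctor on the category of presheaves. Then for every object Γ of ℂ there is a bijection, natural in Γ, between maps yΓ ⟶ P_p(U) and pairs of maps (A : yΓ ⟶ U, B : yΓ ×_U Ũ ⟶ U), where yΓ ×_U Ũ denotes the pullback of p along A. -/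
open CategoryTheory Category Limits Opposite MonoidalCategory

universe v u

noncomputable section

namespace NatModel

variable {C : Type u} [SmallCategory C]


/-- A natural transformation of presheaves on a small category `C` is **representable** if,
for every `c : C` and every `x : yC ⟶ X`, there are `d : C`, `p : d ⟶ c` and `η : yd ⟶ Y`
making the square with top `η`, left `y p`, right `f` and bottom `x` a pullback. -/
def RepNT {Y X : Cᵒᵖ ⥤ Type u} (f : Y ⟶ X) : Prop :=
  ∀ (c : C) (x : yoneda.obj c ⟶ X), ∃ (d : C) (p : d ⟶ c) (η : yoneda.obj d ⟶ Y),
    IsPullback η (yoneda.map p) f x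


section Poly

variable {U' U : Cᵒᵖ ⥤ Type u}

/-- The polynomial endofunctor `P_p = Σ_U ∘ Π_p ∘ Ũ*` of `p : Ũ ⟶ U`, where
`F` is a right adjoint to pullback along `p` (i.e. `F = Π_p`), `Over.star Ũ` is base change
`Ũ* = (Ũ ⨯ -)` and `Over.forget U = Σ_U`. -/
def polyFunctor (p : U' ⟶ U) (F : Over U' ⥤ Over U) : (Cᵒᵖ ⥤ Type u) ⥤ (Cᵒᵖ ⥤ Type u) :=
  Over.star U' ⋙ F ⋙ Over.forget U

/-- The first component (canonical projection `P_p(X) ⟶ U`) of the pair of maps classifying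
the identity of `P_p(X)`. -/
def polyProj (p : U' ⟶ U) (F : Over U' ⥤ Over U) (X : Cᵒᵖ ⥤ Type u) :
    (polyFunctor p F).obj X ⟶ U :=
  (F.obj ((Over.star U').obj X)).hom

/-- The second component (evaluation `P_p(X) ×_U Ũ ⟶ X`) of the pair of maps classifying
the identity of `P_p(X)`; it is obtained from the counit of `Over.pullback p ⊣ F = Π_p`. -/
def polyEv (p : U' ⟶ U) (F : Over U' ⥤ Over U) (adj : Over.pullback p ⊣ F)
    (X : Cᵒᵖ ⥤ Type u) : pullback (polyProj p F X) p ⟶ X :=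
  (adj.counit.app ((Over.star U').obj X)).left ≫ (Over.forgetAdjStar U').counit.app X

/-- The map `π̃ : Q ⟶ P_p(U)`, the composite of the pullback projection
`Q = (P_p(U) ×_U Ũ) ×_U Ũ ⟶ P_p(U) ×_U Ũ` with the projection to `P_p(U)`. -/
def polyTilde (p : U' ⟶ U) (F : Over U' ⥤ Over U) (adj : Over.pullback p ⊣ F) :
    pullback (polyEv p F adj U) p ⟶ (polyFunctor p F).obj U :=
  pullback.fst (polyEv p F adj U) p ≫ pullback.fst (polyProj p F U) p

end Poly

/-!
A map `Γ ⟶ Σ_U Π_p Ũ*X` is a map `A : Γ ⟶ U` together with a map `A ⟶ Π_p Ũ*X` over `U`.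
Transposing the latter along `p* ⊣ Π_p` and then along `Σ_Ũ ⊣ Ũ*` gives a map
`Γ ×_U Ũ ⟶ X`. Both transpositions are natural in their first variable, which is where
naturality in `Γ` comes from.
-/

section PolyHomEquiv

variable {E : Type*} [Category E]

def overHomEquiv {V : E} (X : Over V) (Γ : E) :
    (Γ ⟶ X.left) ≃ Σ A : Γ ⟶ V, (Over.mk A ⟶ X) where
  toFun g := ⟨g ≫ X.hom, Over.homMk g⟩
  invFun x := x.2.left
  left_inv _ := rfl
  right_inv := fun ⟨A, w⟩ => by
    -- `A` cannot be substituted while `w` depends on it, so abstract over `w.left` first.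
    have key : ∀ (l : Γ ⟶ X.left) (h : l ≫ X.hom = A),
        (⟨l ≫ X.hom, Over.homMk l⟩ : Σ A : Γ ⟶ V, (Over.mk A ⟶ X)) = ⟨A, Over.homMk l h⟩ := by
      rintro l rfl
      rfl
    exact key w.left (Over.w w)

variable [HasPullbacks E] [HasBinaryProducts E] {U' U : E} (p : U' ⟶ U)
  (F : Over U' ⥤ Over U) (adj : Over.pullback p ⊣ F)

def polyHomEquiv (X Γ : E) :
    (Γ ⟶ (F.obj ((Over.star U').obj X)).left) ≃ Σ A : Γ ⟶ U, (pullback A p ⟶ X) :=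
  (overHomEquiv _ Γ).trans <| Equiv.sigmaCongrRight fun A =>
    (adj.homEquiv (Over.mk A) _).symm.trans ((Over.forgetAdjStar U').homEquiv _ X).symm

lemma polyHomEquiv_apply_snd {X Γ : E} (g : Γ ⟶ (F.obj ((Over.star U').obj X)).left) :
    (polyHomEquiv p F adj X Γ g).2 =
      ((Over.forgetAdjStar U').homEquiv _ X).symm
        ((adj.homEquiv (Over.mk (g ≫ (F.obj ((Over.star U').obj X)).hom)) _).symm
          (Over.homMk g)) :=
  rfl

lemma polyHomEquiv_comp_apply_fst {X Γ' Γ : E} (σ : Γ' ⟶ Γ)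
    (g : Γ ⟶ (F.obj ((Over.star U').obj X)).left) :
    (polyHomEquiv p F adj X Γ' (σ ≫ g)).1 = σ ≫ (polyHomEquiv p F adj X Γ g).1 :=
  assoc _ _ _

lemma polyHomEquiv_comp_apply_snd {X Γ' Γ : E} (σ : Γ' ⟶ Γ)
    (g : Γ ⟶ (F.obj ((Over.star U').obj X)).left) :
    (polyHomEquiv p F adj X Γ' (σ ≫ g)).2 =
      pullback.lift (pullback.fst _ p ≫ σ) (pullback.snd _ p)
        (by rw [assoc, ← polyHomEquiv_comp_apply_fst]; exact pullback.condition) ≫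
        (polyHomEquiv p F adj X Γ g).2 := by
  set π := (F.obj ((Over.star U').obj X)).hom
  have homMk_comp : Over.homMk (U := Over.mk ((σ ≫ g) ≫ π)) (σ ≫ g) =
      Over.homMk (V := Over.mk (g ≫ π)) σ (assoc _ _ _).symm ≫ Over.homMk g :=
    rfl
  rw [polyHomEquiv_apply_snd, polyHomEquiv_apply_snd, homMk_comp,
    adj.homEquiv_naturality_left_symm, Adjunction.homEquiv_naturality_left_symm]
  -- `(Over.pullback p).map` is by definition the induced map `pullback.lift` of pullbacks.
  rfl

end PolyHomEquiv

/-- For a representable natural transformation `p : Ũ ⟶ U` of presheaves with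
polynomial endofunctor `P_p` (presented by a right adjoint `F = Π_p` to pullback along `p`),
maps `yΓ ⟶ P_p(U)` correspond bijectively, naturally in `Γ`, to pairs `(A : yΓ ⟶ U,
B : yΓ ×_U Ũ ⟶ U)`, where `yΓ ×_U Ũ` is the pullback of `p` along `A`. -/
theorem classify_types_in_extended_context {U' U : Cᵒᵖ ⥤ Type u} (p : U' ⟶ U)
    (F : Over U' ⥤ Over U) (adj : Over.pullback p ⊣ F) :
    ∃ e : ∀ Γ : C, (yoneda.obj Γ ⟶ (polyFunctor p F).obj U) ≃
        (Σ A : yoneda.obj Γ ⟶ U, (pullback A p ⟶ U)),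
      ∀ {Γ' Γ : C} (σ : Γ' ⟶ Γ) (g : yoneda.obj Γ ⟶ (polyFunctor p F).obj U),
        ∃ h1 : ((e Γ') (yoneda.map σ ≫ g)).1 = yoneda.map σ ≫ ((e Γ) g).1,
          ((e Γ') (yoneda.map σ ≫ g)).2 =
            pullback.lift (pullback.fst (((e Γ') (yoneda.map σ ≫ g)).1) p ≫ yoneda.map σ)
              (pullback.snd (((e Γ') (yoneda.map σ ≫ g)).1) p)
              (by rw [Category.assoc, ← h1]; exact pullback.condition) ≫ ((e Γ) g).2 :=
  ⟨fun Γ => polyHomEquiv p F adj U (yoneda.obj Γ), fun σ g =>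
    ⟨polyHomEquiv_comp_apply_fst p F adj (yoneda.map σ) g,
      polyHomEquiv_comp_apply_snd p F adj (yoneda.map σ) g⟩⟩

end NatModel

end
end

section
/- Let ℂ be a small category, I an index type, and for each i ∈ I let f_i : Y_i ⟶ X_i be a representable natural transformation of presheaves on ℂ. Then the induced map on coproducts ∐_{i∈I} f_i : ∐_{i∈I} Y_i ⟶ ∐_{i∈I} X_i is representable. -/
/-!
A map `yC ⟶ ∐ Xᵢ` is an element of `(∐ Xᵢ)(C) = Σᵢ Xᵢ(C)`, so it factors through a single
injection `ιⱼ : Xⱼ ⟶ ∐ Xᵢ`. Since coproducts of sets are disjoint with injective injections, the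
square `ιⱼ ≫ ∐ fᵢ = fⱼ ≫ ιⱼ` is a pullback; pasting it onto the pullback square that exhibits
`fⱼ` as representable gives the square for `∐ fᵢ`.
-/

open CategoryTheory Category Limits Opposite MonoidalCategory

universe v u

noncomputable section

namespace NatModel

variable {C : Type u} [SmallCategory C]


universe w

theorem Types.isPullback_cofanInj_of_isColimit {I : Type*} {Y X : I → Type w}
    {c : Cofan Y} {d : Cofan X} (hc : IsColimit c) (hd : IsColimit d)
    (f : ∀ i, Y i ⟶ X i) (g : c.pt ⟶ d.pt) (hg : ∀ i, c.inj i ≫ g = f i ≫ d.inj i) (i : I) :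
    IsPullback (c.inj i) (f i) g (d.inj i) := by
  refine (Types.isPullback_iff _ _ _ _).2
    ⟨hg i, fun y y' h ↦ Cofan.inj_injective_of_isColimit hc i h.1, fun u x hux ↦ ?_⟩
  obtain ⟨j, y, rfl⟩ := Cofan.inj_jointly_surjective_of_isColimit hc u
  have hyx : d.inj j (f j y) = d.inj i x := by
    rw [← hux]
    exact (ConcreteCategory.congr_hom (hg j) y).symm
  obtain ⟨rfl, rfl⟩ := (Cofan.inj_apply_eq_iff_of_isColimit hd _ _).1 hyx
  exact ⟨y, rfl, rfl⟩

theorem isPullback_sigmaι_sigmaMap {K : Type*} [Category K] {I : Type v}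
    (Y X : I → K ⥤ Type v) (f : ∀ i, Y i ⟶ X i) (i : I) :
    IsPullback (Sigma.ι Y i) (f i) (Limits.Sigma.map f) (Sigma.ι X i) :=
  IsPullback.of_forall_isPullback_app fun k ↦
    Types.isPullback_cofanInj_of_isColimit
      (isColimitOfHasCoproductOfPreservesColimit ((evaluation K (Type v)).obj k) Y)
      (isColimitOfHasCoproductOfPreservesColimit ((evaluation K (Type v)).obj k) X)
      (fun j ↦ (f j).app k) ((Limits.Sigma.map f).app k)
      (fun j ↦ congr_app (Sigma.ι_map f j) k) i

theorem exists_eq_comp_sigmaι_of_yoneda {𝒞 : Type*} [Category.{v} 𝒞] {I : Type v}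
    (X : I → 𝒞ᵒᵖ ⥤ Type v) {c : 𝒞} (x : yoneda.obj c ⟶ ∐ X) :
    ∃ (j : I) (x' : yoneda.obj c ⟶ X j), x = x' ≫ Sigma.ι X j := by
  obtain ⟨j, t, ht⟩ := Cofan.inj_jointly_surjective_of_isColimit
    (isColimitOfHasCoproductOfPreservesColimit ((evaluation 𝒞ᵒᵖ (Type v)).obj (op c)) X)
    (yonedaEquiv x)
  refine ⟨j, yonedaEquiv.symm t, yonedaEquiv.injective ?_⟩
  rw [yonedaEquiv_comp, Equiv.apply_symm_apply]
  exact ht.symm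

/-- A coproduct of representable natural transformations is representable. -/
theorem repNT_coproduct (I : Type u) (Y X : I → Cᵒᵖ ⥤ Type u)
    (f : ∀ i, Y i ⟶ X i) (hf : ∀ i, RepNT (f i)) :
    RepNT (C := C) (Limits.Sigma.map f) := by
  intro c x
  obtain ⟨j, x', rfl⟩ := exists_eq_comp_sigmaι_of_yoneda X x
  obtain ⟨d, p, η, hp⟩ := hf j c x'
  exact ⟨d, p, η ≫ Sigma.ι Y j, hp.paste_horiz (isPullback_sigmaι_sigmaMap Y X f j)⟩

end NatModel

end
end

section
/- Let ℂ be a small category and f : A ⟶ B a natural transformation of presheaves on ℂ. Then f is representable if and only if the induced functor ∫f : ∫A → ∫B between the categories of elements has a right adjoint. -/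
open CategoryTheory Category Limits Opposite MonoidalCategory

universe v u

noncomputable section

namespace NatModel

variable {C : Type u} [SmallCategory C]


/-!
Both sides unfold, by the Yoneda lemma, to one elementwise universal property of a triple
`(d, p : d ⟶ c, a ∈ A d)` lying over an element `b ∈ B c`: every triple
`(e, u : e ⟶ c, a' ∈ A e)` with `f a' = B(u) b` factors through it along a unique
`v : e ⟶ d`. For the square over `yoneda.obj c` this is the pointwise description of
pullbacks of sets. For `∫f` it says that `(d, a, p)` is terminal in the comma category
`∫f ↓ (c, b)`, and a functor is a left adjoint exactly when its comma categories have
terminal objects.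
-/

section

variable {D : Type*} [Category.{v} D] {A B : Dᵒᵖ ⥤ Type v}

variable (f : A ⟶ B) in
def IsUniversalLift {c d : D} (b : B.obj (op c)) (p : d ⟶ c) (a : A.obj (op d)) : Prop :=
  f.app _ a = B.map p.op b ∧
    ∀ ⦃e : D⦄ (a' : A.obj (op e)) (u : e ⟶ c), f.app _ a' = B.map u.op b →
      ∃! v : e ⟶ d, v ≫ p = u ∧ A.map v.op a = a'

variable {f : A ⟶ B}

lemma isPullback_yonedaEquiv_symm_iff {c d : D} (b : B.obj (op c)) (p : d ⟶ c)
    (a : A.obj (op d)) :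
    IsPullback (yonedaEquiv.symm a) (yoneda.map p) f (yonedaEquiv.symm b) ↔
      IsUniversalLift f b p a := by
  rw [IsPullback.iff_app]
  simp only [Types.isPullback_iff, yoneda_map_app]
  constructor
  · intro h
    have comm : f.app _ a = B.map p.op b := by
      simpa using ConcreteCategory.congr_hom (h (op d)).1 (𝟙 d)
    refine ⟨comm, fun e a' u hu => ?_⟩
    obtain ⟨v, hva, hvp⟩ := (h (op e)).2.2 a' u hu
    refine ⟨v, ⟨hvp, hva⟩, fun w ⟨hwp, hwa⟩ => (h (op e)).2.1 w v ⟨?_, ?_⟩⟩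
    · simpa [hwa] using hva.symm
    · simpa [hwp] using hvp.symm
  · rintro ⟨comm, univ⟩ e
    refine ⟨?_, fun v w ⟨hva, hvp⟩ => ?_, fun a' u hu => ?_⟩
    · ext v
      simp [comm]
    · have hw : f.app _ (A.map w.op a) = B.map (w ≫ p).op b := by simp [comm]
      exact (univ _ _ hw).unique ⟨hvp, hva⟩ ⟨rfl, rfl⟩
    · obtain ⟨v, ⟨hvp, hva⟩, -⟩ := univ a' u hu
      exact ⟨v, hva, hvp⟩

open CategoryOfElements

variable (f) in
abbrev costructuredArrowMk {c d : D} (b : B.obj (op c)) (p : d ⟶ c) (a : A.obj (op d))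
    (h : f.app _ a = B.map p.op b) :
    CostructuredArrow (map f).op (op (B.elementsMk (op c) b)) :=
  CostructuredArrow.mk
    (homMk (B.elementsMk (op c) b) ((map f).obj (A.elementsMk (op d) a)) p.op h.symm).op

def costructuredArrowMkHomEquiv {c d : D} {b : B.obj (op c)} {p : d ⟶ c} {a : A.obj (op d)}
    {h : f.app _ a = B.map p.op b} (Y : CostructuredArrow (map f).op (op (B.elementsMk (op c) b))) :
    (Y ⟶ costructuredArrowMk f b p a h) ≃
      {v : Y.left.unop.1.unop ⟶ d //
        v ≫ p = Y.hom.unop.val.unop ∧ A.map v.op a = Y.left.unop.2} where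
  toFun m := ⟨m.left.unop.val.unop,
    congrArg (fun r => r.unop.val.unop) (CostructuredArrow.w m), m.left.unop.property⟩
  invFun v :=
    CostructuredArrow.homMk (homMk (A.elementsMk (op d) a) Y.left.unop v.1.op v.2.2).op
      (Quiver.Hom.unop_inj (Subtype.ext (Quiver.Hom.unop_inj v.2.1)))
  left_inv m := by
    ext
    rfl
  right_inv v := rfl

lemma nonempty_isTerminal_costructuredArrowMk_iff {c d : D} (b : B.obj (op c)) (p : d ⟶ c)
    (a : A.obj (op d)) (h : f.app _ a = B.map p.op b) :
    Nonempty (IsTerminal (costructuredArrowMk f b p a h)) ↔ IsUniversalLift f b p a := by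
  simp only [IsUniversalLift, h, true_and]
  constructor
  · rintro ⟨hT⟩ e a' u hu
    let Y := costructuredArrowMk f b u a' hu
    have : Unique (Y ⟶ costructuredArrowMk f b p a h) :=
      ⟨⟨hT.from Y⟩, fun _ => hT.hom_ext _ _⟩
    exact (unique_subtype_iff_existsUnique _).1 ⟨(costructuredArrowMkHomEquiv Y).symm.unique⟩
  · intro H
    have (Y : CostructuredArrow (map f).op (op (B.elementsMk (op c) b))) :
        Unique (Y ⟶ costructuredArrowMk f b p a h) :=
      @Equiv.unique _ _
        ((unique_subtype_iff_existsUnique _).2 (H _ _ Y.hom.unop.property.symm)).some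
        (costructuredArrowMkHomEquiv Y)
    exact ⟨IsTerminal.ofUnique _⟩

lemma isLeftAdjoint_iff_forall_exists_isUniversalLift :
    (map f).op.IsLeftAdjoint ↔ ∀ (c : D) (b : B.obj (op c)), ∃ (d : D) (p : d ⟶ c)
      (a : A.obj (op d)), IsUniversalLift f b p a := by
  rw [isLeftAdjoint_iff_hasTerminal_costructuredArrow]
  constructor
  · intro H c b
    let T := ⊤_ (CostructuredArrow (map f).op (op (B.elementsMk (op c) b)))
    -- up to η-conversion, `T` is `costructuredArrowMk` of its own components
    exact ⟨T.left.unop.1.unop, T.hom.unop.val.unop, T.left.unop.2,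
      (nonempty_isTerminal_costructuredArrowMk_iff _ _ _ T.hom.unop.property.symm).1
        ⟨terminalIsTerminal⟩⟩
  · rintro H ⟨⟨⟨c⟩, b⟩⟩
    obtain ⟨d, p, a, h, univ⟩ := H c b
    exact ((nonempty_isTerminal_costructuredArrowMk_iff b p a h).2 ⟨h, univ⟩).some.hasTerminal

end

lemma repNT_iff_forall_exists_isUniversalLift {A B : Cᵒᵖ ⥤ Type u} (f : A ⟶ B) :
    RepNT f ↔ ∀ (c : C) (b : B.obj (op c)), ∃ (d : C) (p : d ⟶ c) (a : A.obj (op d)),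
      IsUniversalLift f b p a := by
  simp only [RepNT, ← isPullback_yonedaEquiv_symm_iff]
  refine forall_congr' fun c => ?_
  rw [← yonedaEquiv.symm.forall_congr_right]
  exact forall_congr' fun b => exists_congr fun d => exists_congr fun p =>
    yonedaEquiv.symm.exists_congr_right.symm

/-- A natural transformation of presheaves `f : A ⟶ B` is representable if
and only if the induced functor `∫f : ∫A ⥤ ∫B` on categories of elements has a right adjoint.
Here `∫A` (with objects `(C, x ∈ A(C))` and morphisms `u : C ⟶ C'` with `A(u)(x') = x`) is the
opposite of Mathlib's `A.Elements`, and `∫f` is the opposite of `CategoryOfElements.map f`. -/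
theorem repNT_iff_elements_isLeftAdjoint {A B : Cᵒᵖ ⥤ Type u} (f : A ⟶ B) :
    RepNT f ↔ (CategoryOfElements.map f).op.IsLeftAdjoint :=
  (repNT_iff_forall_exists_isUniversalLift f).trans
    isLeftAdjoint_iff_forall_exists_isUniversalLift.symm

end NatModel

end
end

section
/- Let 𝒟 be a stable class of morphisms in a small category ℂ, with associated natural transformation π : 𝒟₁ ⟶ 𝒟₀, and let d : A₁ → A₀ be a morphism in 𝒟. Then the square of presheaves whose top map yA₁ ⟶ 𝒟₁ sends s : C → A₁ to (s, d), whose bottom map yA₀ ⟶ 𝒟₀ sends t : C → A₀ to (t, d), whose left map is y(d), and whose right map is π, commutes and is a pullback. -/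
open CategoryTheory Category Limits Opposite MonoidalCategory

universe v u

noncomputable section

namespace NatModel

variable {C : Type u} [SmallCategory C]


/-- A class of morphisms is **stable** if in every pullback square whose right-hand vertical
morphism lies in the class, the left-hand vertical morphism also lies in the class. -/
def StableClass {C : Type u} [Category.{u} C] (D : MorphismProperty C) : Prop :=
  ∀ ⦃P X Y Z : C⦄ (fst : P ⟶ X) (snd : P ⟶ Y) (f : X ⟶ Z) (g : Y ⟶ Z),
    IsPullback fst snd f g → D f → D snd

/-- An element of the presheaf `𝒟₁` at `c`: a pair `(a, d)` with `d ∈ 𝒟` and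
`a : c ⟶ dom d`. -/
structure DOneElt (D : MorphismProperty C) (c : C) : Type u where
  {mid : C}
  {tgt : C}
  a : c ⟶ mid
  d : mid ⟶ tgt
  hd : D d

/-- An element of the presheaf `𝒟₀` at `c`: a pair `(b, d)` with `d ∈ 𝒟` and
`b : c ⟶ cod d`. -/
structure DZeroElt (D : MorphismProperty C) (c : C) : Type u where
  {src : C}
  {tgt : C}
  b : c ⟶ tgt
  d : src ⟶ tgt
  hd : D d

/-- The presheaf `𝒟₁` of "terms" of a class of maps `𝒟`; the action is by precomposition
in the first component. -/
@[simps]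
def DOne (D : MorphismProperty C) : Cᵒᵖ ⥤ Type u where
  obj c := DOneElt D c.unop
  map s := TypeCat.ofHom fun e => ⟨s.unop ≫ e.a, e.d, e.hd⟩
  map_id := by intro c; ext e; cases e; simp
  map_comp := by intro _ _ _ s t; ext e; cases e; simp

/-- The presheaf `𝒟₀` of "types" of a class of maps `𝒟`; the action is by precomposition
in the first component. -/
@[simps]
def DZero (D : MorphismProperty C) : Cᵒᵖ ⥤ Type u where
  obj c := DZeroElt D c.unop
  map s := TypeCat.ofHom fun e => ⟨s.unop ≫ e.b, e.d, e.hd⟩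
  map_id := by intro c; ext e; cases e; simp
  map_comp := by intro _ _ _ s t; ext e; cases e; simp

/-- The natural transformation `π : 𝒟₁ ⟶ 𝒟₀`, given by `π (a, d) = (d ∘ a, d)`. -/
@[simps]
def piD (D : MorphismProperty C) : DOne D ⟶ DZero D where
  app c := TypeCat.ofHom fun e => ⟨e.a ≫ e.d, e.d, e.hd⟩
  naturality := by
    intro c c' s; ext e; cases e
    exact congrArg (fun x => (DZeroElt.mk x _ _ : DZeroElt D _)) (Category.assoc _ _ _)


/-- The map `y A₁ ⟶ 𝒟₁` sending `s : c ⟶ A₁` to `(s, d)`. -/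
@[simps]
def yonedaToDOne (D : MorphismProperty C) {A₁ A₀ : C} (d : A₁ ⟶ A₀) (hd : D d) :
    yoneda.obj A₁ ⟶ DOne D where
  app c := TypeCat.ofHom fun s => ⟨s, d, hd⟩
  naturality := by intro c c' u; ext s; rfl

/-- The map `y A₀ ⟶ 𝒟₀` sending `t : c ⟶ A₀` to `(t, d)`. -/
@[simps]
def yonedaToDZero (D : MorphismProperty C) {A₁ A₀ : C} (d : A₁ ⟶ A₀) (hd : D d) :
    yoneda.obj A₀ ⟶ DZero D where
  app c := TypeCat.ofHom fun t => ⟨t, d, hd⟩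
  naturality := by intro c c' u; ext t; rfl

theorem DOneElt.mk_a_injective (D : MorphismProperty C) {c A₁ A₀ : C} {d : A₁ ⟶ A₀} (hd : D d) :
    Function.Injective fun a : c ⟶ A₁ => (DOneElt.mk a d hd : DOneElt D c) := by
  intro a a' h
  simpa using h

theorem exists_eq_mk_of_piD_app_eq {D : MorphismProperty C} {c : Cᵒᵖ} {A₁ A₀ : C}
    {d : A₁ ⟶ A₀} {hd : D d} {t : c.unop ⟶ A₀} (e : DOneElt D c.unop)
    (h : (piD D).app c e = DZeroElt.mk t d hd) :
    ∃ a : c.unop ⟶ A₁, DOneElt.mk a d hd = e ∧ a ≫ d = t := by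
  obtain ⟨a, d', hd'⟩ := e
  obtain ⟨rfl, rfl, ha, hd_eq⟩ := (DZeroElt.mk.injEq ..).mp h
  obtain rfl := eq_of_heq hd_eq
  exact ⟨a, rfl, eq_of_heq ha⟩

theorem display_isPullback_app (D : MorphismProperty C) {A₁ A₀ : C} (d : A₁ ⟶ A₀) (hd : D d) (c : Cᵒᵖ) :
    IsPullback ((yonedaToDOne D d hd).app c) ((yoneda.map d).app c) ((piD D).app c)
      ((yonedaToDZero D d hd).app c) := by
  refine (Types.isPullback_iff _ _ _ _).mpr ⟨rfl, ?_, ?_⟩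
  · rintro a a' ⟨h, -⟩
    exact DOneElt.mk_a_injective D hd h
  · intro e t h
    obtain ⟨a, rfl, rfl⟩ := exists_eq_mk_of_piD_app_eq e h
    exact ⟨a, rfl, rfl⟩

theorem display_isPullback_general (D : MorphismProperty C)
    {A₁ A₀ : C} (d : A₁ ⟶ A₀) (hd : D d) :
    IsPullback (yonedaToDOne D d hd) (yoneda.map d) (piD D) (yonedaToDZero D d hd) :=
  .of_forall_isPullback_app (display_isPullback_app D d hd)

/-- For any `d : A₁ ⟶ A₀` in a stable class `𝒟`, the square with top
`s ↦ (s, d)`, bottom `t ↦ (t, d)`, left `y d` and right `π : 𝒟₁ ⟶ 𝒟₀` commutes and is a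
pullback of presheaves. -/
theorem display_isPullback (D : MorphismProperty C) (hD : StableClass D)
    {A₁ A₀ : C} (d : A₁ ⟶ A₀) (hd : D d) :
    IsPullback (yonedaToDOne D d hd) (yoneda.map d) (piD D) (yonedaToDZero D d hd) :=
  display_isPullback_general D d hd

end NatModel

end
end
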